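/- arXiv:2504.06905 — 4 statements merged into one kernel-verified Lean document; each statement's English description precedes it below -/
import Mathlib

section
/- Let (x_k) be a sequence in ℝ^n converging to x, and let a, b : ℝ^n → ℝ be continuous at x with |b(x)| < 1. Then the sequence defined recursively by y_k = a(x_{k-1}) + b(x_{k-1})·y_{k-1} converges to a(x)/(1 - b(x)). -/
open Filter Topology

theorem stmt0 {n : ℕ} (x : ℕ → (Fin n → ℝ)) (xlim : Fin n → ℝ)
    (hx : Tendsto x atTop (𝓝 xlim))
    (a b : (Fin n → ℝ) → ℝ)
    (ha : ContinuousAt a xlim) (hb : ContinuousAt b xlim)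
    (hb1 : |b xlim| < 1)
    (y : ℕ → ℝ)
    (hy : ∀ k, y (k + 1) = a (x k) + b (x k) * y k) :
    Tendsto y atTop (𝓝 (a xlim / (1 - b xlim))) := by
  set L := a xlim / (1 - b xlim) with hL
  have hbne : (1 : ℝ) - b xlim ≠ 0 := by
    intro h
    have hb : b xlim = 1 := by linarith
    rw [hb] at hb1
    simp at hb1
  have hfix : a xlim + b xlim * L = L := by
    rw [hL]; field_simp; ring
  set e : ℕ → ℝ := fun k => y k - L with he
  set c : ℕ → ℝ := fun k => a (x k) + b (x k) * L - L with hc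
  have hrec : ∀ k, e (k + 1) = b (x k) * e k + c k := by
    intro k
    simp only [he, hc, hy k]
    ring
  have hax : Tendsto (fun k => a (x k)) atTop (𝓝 (a xlim)) := ha.tendsto.comp hx
  have hbx : Tendsto (fun k => b (x k)) atTop (𝓝 (b xlim)) := hb.tendsto.comp hx
  have hclim : Tendsto c atTop (𝓝 0) := by
    have : Tendsto c atTop (𝓝 (a xlim + b xlim * L - L)) :=
      ((hax.add (hbx.mul tendsto_const_nhds)).sub tendsto_const_nhds)
    rwa [hfix, sub_self] at this
  set r : ℝ := (|b xlim| + 1) / 2 with hr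
  have hr0 : 0 < r := by positivity
  have hbr : |b xlim| < r := by rw [hr]; linarith
  have hr1 : r < 1 := by rw [hr]; linarith
  have hbev : ∀ᶠ k in atTop, |b (x k)| < r :=
    (hbx.abs).eventually_lt_const hbr
  -- main: e → 0
  have he0 : Tendsto e atTop (𝓝 0) := by
    rw [Metric.tendsto_atTop]
    intro ε hε
    set δ : ℝ := ε * (1 - r) / 4 with hδ
    have hδ0 : 0 < δ := by
      apply mul_pos (mul_pos hε (by linarith)) (by norm_num)
    have hrne : (1:ℝ) - r ≠ 0 := by linarith
    have hcev : ∀ᶠ k in atTop, |c k| < δ := by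
      have h := hclim.abs
      rw [abs_zero] at h
      exact h.eventually_lt_const hδ0
    obtain ⟨N, hN⟩ := (hbev.and hcev).exists_forall_of_atTop
    have key : ∀ j, |e (N + j)| ≤ r ^ j * |e N| + δ / (1 - r) := by
      intro j
      induction j with
      | zero =>
        simp only [Nat.add_zero, pow_zero, one_mul]
        have h : 0 ≤ δ / (1 - r) := div_nonneg hδ0.le (by linarith)
        linarith
      | succ j ih =>
        have h1 : N + (j + 1) = (N + j) + 1 := by ring
        rw [h1, hrec]
        calc |b (x (N + j)) * e (N + j) + c (N + j)|
            ≤ |b (x (N + j))| * |e (N + j)| + |c (N + j)| := by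
              refine (abs_add_le _ _).trans ?_
              rw [abs_mul]
          _ ≤ r * (r ^ j * |e N| + δ / (1 - r)) + δ := by
              have h2 := (hN (N + j) (by omega)).1
              have h3 := (hN (N + j) (by omega)).2
              have := mul_le_mul (le_of_lt h2) ih (abs_nonneg _)
                (le_of_lt hr0)
              linarith
          _ ≤ r ^ (j + 1) * |e N| + δ / (1 - r) := by
              have hD : r * (δ / (1 - r)) + δ = δ / (1 - r) := by
                field_simp
                ring
              have hps : r ^ (j + 1) = r ^ j * r := pow_succ r j
              nlinarith [pow_nonneg hr0.le j, abs_nonneg (e N)]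
    have hpow : Tendsto (fun K => r ^ K * |e N|) atTop (𝓝 0) := by
      have := tendsto_pow_atTop_nhds_zero_of_lt_one hr0.le hr1
      simpa using this.mul_const |e N|
    obtain ⟨K, hK⟩ := ((hpow.eventually_lt_const (by linarith : (0:ℝ) < ε/2)).exists)
    refine ⟨N + K, fun m hm => ?_⟩
    rw [Real.dist_eq, sub_zero]
    obtain ⟨j, rfl⟩ : ∃ j, m = N + j := ⟨m - N, by omega⟩
    have hjK : K ≤ j := by omega
    have h4 : r ^ j * |e N| ≤ r ^ K * |e N| :=
      mul_le_mul_of_nonneg_right (pow_le_pow_of_le_one hr0.le hr1.le hjK) (abs_nonneg _)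
    have h5 : δ / (1 - r) = ε / 4 := by
      have hrne : (1:ℝ) - r ≠ 0 := by linarith
      rw [hδ]
      field_simp
    have := key j
    rw [h5] at this
    calc |e (N + j)| ≤ r ^ j * |e N| + ε / 4 := this
      _ ≤ r ^ K * |e N| + ε / 4 := by linarith
      _ < ε := by linarith
  have : Tendsto (fun k => e k + L) atTop (𝓝 (0 + L)) := he0.add tendsto_const_nhds
  simpa [he] using this
end

section
/- Under the hypotheses of the previous fixed-point construction (S strictly lower triangular with entries in [0,1] and row sums at most 1, R diagonal with r_{jj} = 1 iff j ≤ m, and |r_{jj} - Σ_{i<j} s_{ji} p_i| < 1 for all j > m and all feasible p), the map T(p) = Sp + Rp - (Sp)*p maps {1}^m × [0,1]^{n-m} into itself; i.e., if p_j = 1 for j ≤ m and p_j ∈ [0,1] for j > m, then the same holds for T(p). -/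
open Finset

theorem stmt5 {n m : ℕ} (S R : Matrix (Fin n) (Fin n) ℝ)
    (hSentries : ∀ i j, S i j ∈ Set.Icc (0 : ℝ) 1)
    (hSlower : ∀ i j : Fin n, i ≤ j → S i j = 0)
    (hSrow : ∀ j : Fin n, ∑ i, S j i ≤ 1)
    (hRdiag : ∀ i j : Fin n, i ≠ j → R i j = 0)
    (hR01 : ∀ j, R j j ∈ Set.Icc (0 : ℝ) 1)
    (hR1 : ∀ j : Fin n, R j j = 1 ↔ (j : ℕ) < m)
    (hcontr : ∀ (j : Fin n), m ≤ (j : ℕ) → ∀ p : Fin n → ℝ,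
      (∀ i : Fin n, (i : ℕ) < m → p i = 1) → (∀ i, p i ∈ Set.Icc (0 : ℝ) 1) →
      |R j j - ∑ i ∈ univ.filter (fun i => i < j), S j i * p i| < 1)
    (p : Fin n → ℝ)
    (hp1 : ∀ j : Fin n, (j : ℕ) < m → p j = 1)
    (hp01 : ∀ j, p j ∈ Set.Icc (0 : ℝ) 1) :
    (∀ j : Fin n, (j : ℕ) < m →
      (S.mulVec p + R.mulVec p - S.mulVec p * p) j = 1) ∧
    (∀ j : Fin n,
      (S.mulVec p + R.mulVec p - S.mulVec p * p) j ∈ Set.Icc (0 : ℝ) 1) := by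
  have hq0 : ∀ j : Fin n, 0 ≤ S.mulVec p j := by
    intro j
    have : S.mulVec p j = ∑ i, S j i * p i := rfl
    rw [this]
    apply Finset.sum_nonneg
    intro i _
    exact mul_nonneg (hSentries j i).1 (hp01 i).1
  have hq1 : ∀ j : Fin n, S.mulVec p j ≤ 1 := by
    intro j
    calc S.mulVec p j = ∑ i, S j i * p i := rfl
      _ ≤ ∑ i, S j i :=
          Finset.sum_le_sum (fun i _ =>
            mul_le_of_le_one_right (hSentries j i).1 (hp01 i).2)
      _ ≤ 1 := hSrow j
  have hRmv : ∀ j : Fin n, R.mulVec p j = R j j * p j := by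
    intro j
    have : R.mulVec p j = ∑ i, R j i * p i := rfl
    rw [this, Finset.sum_eq_single j]
    · intro i _ hij
      rw [hRdiag j i (Ne.symm hij), zero_mul]
    · intro h; exact absurd (Finset.mem_univ j) h
  have hT : ∀ j : Fin n,
      (S.mulVec p + R.mulVec p - S.mulVec p * p) j
        = (1 - p j) * S.mulVec p j + p j * (R j j) := by
    intro j
    simp only [Pi.add_apply, Pi.sub_apply, Pi.mul_apply, hRmv]
    ring
  constructor
  · intro j hj
    rw [hT j, hp1 j hj, (hR1 j).mpr hj]
    ring
  · intro j
    rw [hT j]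
    have hpj := hp01 j
    have hR := hR01 j
    constructor
    · have h1 : 0 ≤ (1 - p j) * S.mulVec p j :=
        mul_nonneg (by linarith [hpj.2]) (hq0 j)
      have h2 : 0 ≤ p j * R j j := mul_nonneg hpj.1 hR.1
      linarith
    · have h1 : (1 - p j) * S.mulVec p j ≤ (1 - p j) :=
        mul_le_of_le_one_right (by linarith [hpj.2]) (hq1 j)
      have h2 : p j * R j j ≤ p j := mul_le_of_le_one_right hpj.1 hR.2
      linarith
end

section
/- (Main convergence theorem) Let S ∈ [0,1]^{n×n} be strictly lower triangular with each row L¹-norm at most 1, and R ∈ [0,1]^{n×n} diagonal with r_{jj} = 1 exactly for j ≤ m; assume for each j > m that |r_{jj} - Σ_{i<j} s_{ji}·x_i| < 1 for all x ∈ {1}^m × [0,1]^{n-m}. Define T(p) = Sp + Rp - (Sp)*p on {1}^m × [0,1]^{n-m}. Then for every p in this domain, the iterates T^k(p) converge (componentwise) as k → ∞ to the vector p* given by p*_j = 1 for j ≤ m and p*_j = (Σ_{i<j} s_{ji} p*_i)/(1 - r_{jj} + Σ_{i<j} s_{ji} p*_i) for j > m. In particular p* is the unique fixed point of T in the domain.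 -/
open Finset Filter Topology

lemma geom_aux {e c : ℕ → ℝ} {r : ℝ} (hr0 : 0 ≤ r) (hr1 : r < 1)
    (hc : Tendsto c atTop (𝓝 0))
    (hstep : ∀ k, |e (k+1)| ≤ c k + r * |e k|) :
    Tendsto e atTop (𝓝 0) := by
  rw [Metric.tendsto_atTop]
  intro ε hε
  have hε2 : 0 < ε * (1 - r) / 2 := by
    have : 0 < 1 - r := by linarith
    positivity
  obtain ⟨N, hN⟩ := (Metric.tendsto_atTop.mp hc) (ε*(1-r)/2) hε2
  have key : ∀ jj : ℕ, |e (N + jj)| ≤ r ^ jj * |e N| + ε / 2 := by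
    intro jj
    induction jj with
    | zero => simp; linarith
    | succ j ih =>
      have h2 : c (N + j) < ε*(1-r)/2 := by
        have := hN (N+j) (Nat.le_add_right _ _)
        rw [Real.dist_eq, sub_zero] at this
        exact lt_of_le_of_lt (le_abs_self _) this
      have h3 : r * |e (N+j)| ≤ r * (r^j * |e N| + ε/2) :=
        mul_le_mul_of_nonneg_left ih hr0
      calc |e (N + (j+1))| = |e ((N+j)+1)| := by ring_nf
        _ ≤ c (N+j) + r * |e (N+j)| := hstep _
        _ ≤ ε*(1-r)/2 + r * (r^j * |e N| + ε/2) := by linarith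
        _ = r^(j+1) * |e N| + ε/2 := by ring
  have hgeo : Tendsto (fun jj => r ^ jj * |e N|) atTop (𝓝 0) := by
    simpa using (tendsto_pow_atTop_nhds_zero_of_lt_one hr0 hr1).mul_const |e N|
  obtain ⟨M, hM⟩ := (Metric.tendsto_atTop.mp hgeo) (ε/2) (by linarith)
  refine ⟨N + M, fun k hk => ?_⟩
  obtain ⟨jj, rfl, hjj⟩ : ∃ jj, k = N + jj ∧ M ≤ jj := ⟨k - N, by omega, by omega⟩
  have h1 := key jj
  have h2 := hM jj hjj
  rw [Real.dist_eq, sub_zero] at h2 ⊢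
  have h3 : r ^ jj * |e N| < ε/2 := lt_of_le_of_lt (le_abs_self _) h2
  linarith

lemma affine_aux {a b y : ℕ → ℝ} {A B : ℝ}
    (ha : Tendsto a atTop (𝓝 A)) (hb : Tendsto b atTop (𝓝 B))
    (hB : |B| < 1) (hy : ∀ k, |y k| ≤ 1)
    (hrec : ∀ k, y (k+1) = a k + b k * y k) :
    Tendsto y atTop (𝓝 (A / (1 - B))) := by
  set L := A / (1 - B) with hL
  have hB' := abs_lt.mp hB
  have h1B : (1 : ℝ) - B ≠ 0 := by intro h; linarith [hB'.2]
  have hLeq : A + B * L = L := by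
    rw [hL]; field_simp; ring
  have he : Tendsto (fun k => y k - L) atTop (𝓝 0) := by
    apply geom_aux (r := |B|) (c := fun k => |a k - A| + |b k - B|) (abs_nonneg B) hB
    · have h1 : Tendsto (fun k => |a k - A|) atTop (𝓝 0) := by
        have := (ha.sub_const A).abs; simpa using this
      have h2 : Tendsto (fun k => |b k - B|) atTop (𝓝 0) := by
        have := (hb.sub_const B).abs; simpa using this
      simpa using h1.add h2
    · intro k
      have heq : y (k+1) - L = (a k - A) + (b k - B) * y k + B * (y k - L) := by
        rw [hrec k]; nlinarith [hLeq]
      rw [heq]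
      calc |(a k - A) + (b k - B) * y k + B * (y k - L)|
          ≤ |(a k - A) + (b k - B) * y k| + |B * (y k - L)| := abs_add_le _ _
        _ ≤ |a k - A| + |(b k - B) * y k| + |B * (y k - L)| := by
            linarith [abs_add_le (a k - A) ((b k - B) * y k)]
        _ ≤ |a k - A| + |b k - B| + |B| * |y k - L| := by
            rw [abs_mul, abs_mul]
            have := mul_le_of_le_one_right (abs_nonneg (b k - B)) (hy k)
            linarith
  have := he.add_const L
  simpa using this

theorem stmt6 {n m : ℕ} (S R : Matrix (Fin n) (Fin n) ℝ)
    (hSentries : ∀ i j, S i j ∈ Set.Icc (0 : ℝ) 1)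
    (hSlower : ∀ i j : Fin n, i ≤ j → S i j = 0)
    (hSrow : ∀ j : Fin n, ∑ i, S j i ≤ 1)
    (hRdiag : ∀ i j : Fin n, i ≠ j → R i j = 0)
    (hR01 : ∀ j, R j j ∈ Set.Icc (0 : ℝ) 1)
    (hR1 : ∀ j : Fin n, R j j = 1 ↔ (j : ℕ) < m)
    (hcontr : ∀ (j : Fin n), m ≤ (j : ℕ) → ∀ x : Fin n → ℝ,
      (∀ i : Fin n, (i : ℕ) < m → x i = 1) → (∀ i, x i ∈ Set.Icc (0 : ℝ) 1) →
      |R j j - ∑ i ∈ univ.filter (fun i => i < j), S j i * x i| < 1)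
    (T : (Fin n → ℝ) → (Fin n → ℝ))
    (hT : ∀ p, T p = S.mulVec p + R.mulVec p - S.mulVec p * p)
    (pstar : Fin n → ℝ)
    (hp1 : ∀ j : Fin n, (j : ℕ) < m → pstar j = 1)
    (hp2 : ∀ j : Fin n, m ≤ (j : ℕ) →
      pstar j = (∑ i ∈ univ.filter (fun i => i < j), S j i * pstar i) /
        (1 - R j j + ∑ i ∈ univ.filter (fun i => i < j), S j i * pstar i)) :
    (∀ p : Fin n → ℝ,
      (∀ j : Fin n, (j : ℕ) < m → p j = 1) → (∀ j, p j ∈ Set.Icc (0 : ℝ) 1) →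
      ∀ j : Fin n, Tendsto (fun k => T^[k] p j) atTop (𝓝 (pstar j))) ∧
    (∀ q : Fin n → ℝ,
      (∀ j : Fin n, (j : ℕ) < m → q j = 1) → (∀ j, q j ∈ Set.Icc (0 : ℝ) 1) →
      T q = q → q = pstar) := by
  -- notation for the partial sums
  set sF : Fin n → (Fin n → ℝ) → ℝ :=
    fun j q => ∑ i ∈ univ.filter (fun i => i < j), S j i * q i with hsF
  -- the basic formula for T
  have hTj : ∀ q (j : Fin n), T q j = sF j q + (R j j - sF j q) * q j := by
    intro q j
    have hS : (S.mulVec q) j = sF j q := by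
      rw [hsF]
      simp only [Matrix.mulVec, dotProduct]
      refine (Finset.sum_filter_of_ne ?_).symm
      intro i _ hne
      by_contra hlt
      exact hne (by rw [hSlower j i (not_lt.mp hlt)]; ring)
    have hRv : (R.mulVec q) j = R j j * q j := by
      simp only [Matrix.mulVec, dotProduct]
      rw [Finset.sum_eq_single_of_mem j (mem_univ j)]
      intro i _ hij
      rw [hRdiag j i (Ne.symm hij)]; ring
    rw [hT]
    simp only [Pi.sub_apply, Pi.add_apply, Pi.mul_apply, hS, hRv]
    ring
  -- bounds on the partial sums
  have hsb : ∀ q, (∀ i, q i ∈ Set.Icc (0:ℝ) 1) → ∀ j, sF j q ∈ Set.Icc (0:ℝ) 1 := by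
    intro q hq j
    constructor
    · exact Finset.sum_nonneg fun i _ => mul_nonneg (hSentries j i).1 (hq i).1
    · calc sF j q ≤ ∑ i ∈ univ.filter (fun i => i < j), S j i :=
            Finset.sum_le_sum fun i _ =>
              mul_le_of_le_one_right (hSentries j i).1 (hq i).2
        _ ≤ ∑ i, S j i :=
            Finset.sum_le_sum_of_subset_of_nonneg (filter_subset _ _)
              (fun i _ _ => (hSentries j i).1)
        _ ≤ 1 := hSrow j
  -- invariance of the domain
  have hinv : ∀ q, (∀ j : Fin n, (j:ℕ) < m → q j = 1) → (∀ j, q j ∈ Set.Icc (0:ℝ) 1) →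
      (∀ j : Fin n, (j:ℕ) < m → T q j = 1) ∧ (∀ j, T q j ∈ Set.Icc (0:ℝ) 1) := by
    intro q hq1 hq01
    constructor
    · intro j hj
      rw [hTj, (hR1 j).mpr hj, hq1 j hj]; ring
    · intro j
      rw [hTj]
      obtain ⟨hs0, hs1⟩ := hsb q hq01 j
      obtain ⟨hq0, hq1'⟩ := hq01 j
      obtain ⟨hR0, hR1'⟩ := hR01 j
      constructor
      · nlinarith
      · nlinarith
  -- iterates stay in the domain
  have hdom : ∀ p : Fin n → ℝ, (∀ j : Fin n, (j:ℕ) < m → p j = 1) →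
      (∀ j, p j ∈ Set.Icc (0:ℝ) 1) → ∀ k,
      (∀ j : Fin n, (j:ℕ) < m → T^[k] p j = 1) ∧ (∀ j, T^[k] p j ∈ Set.Icc (0:ℝ) 1) := by
    intro p hp1' hp01 k
    induction k with
    | zero => exact ⟨hp1', hp01⟩
    | succ k ih =>
      rw [Function.iterate_succ_apply']
      exact hinv _ ih.1 ih.2
  -- the main convergence claim
  have main : ∀ p : Fin n → ℝ,
      (∀ j : Fin n, (j : ℕ) < m → p j = 1) → (∀ j, p j ∈ Set.Icc (0 : ℝ) 1) →
      ∀ j : Fin n, Tendsto (fun k => T^[k] p j) atTop (𝓝 (pstar j)) := by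
    intro p hpm hp01
    have hd := hdom p hpm hp01
    -- strong induction on the value of j
    have key : ∀ t : ℕ, ∀ j : Fin n, (j : ℕ) < t →
        Tendsto (fun k => T^[k] p j) atTop (𝓝 (pstar j)) := by
      intro t
      induction t with
      | zero => intro j hj; omega
      | succ t IHt =>
        intro j hj
        have IH : ∀ i : Fin n, i < j → Tendsto (fun k => T^[k] p i) atTop (𝓝 (pstar i)) :=
          fun i hi => IHt i (by omega)
        by_cases hjm : (j : ℕ) < m
        · have hconst : (fun k => T^[k] p j) = fun _ => pstar j := by
            funext k
            rw [(hd k).1 j hjm, hp1 j hjm]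
          rw [hconst]
          exact tendsto_const_nhds
        · push_neg at hjm
          set A := ∑ i ∈ univ.filter (fun i => i < j), S j i * pstar i with hA
          have hatend : Tendsto (fun k => sF j (T^[k] p)) atTop (𝓝 A) := by
            rw [hA, hsF]
            apply tendsto_finset_sum
            intro i hi
            exact tendsto_const_nhds.mul (IH i (mem_filter.mp hi).2)
          -- pstar bounds below j
          have hps : ∀ i : Fin n, i < j → pstar i ∈ Set.Icc (0:ℝ) 1 := by
            intro i hi
            exact isClosed_Icc.mem_of_tendsto (IH i hi)
              (Eventually.of_forall fun k => (hd k).2 i)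
          -- contraction at the limit
          have hBlt : |R j j - A| < 1 := by
            set x : Fin n → ℝ := fun i =>
              if i < j then pstar i else if (i : ℕ) < m then 1 else 0 with hx
            have hx1 : ∀ i : Fin n, (i : ℕ) < m → x i = 1 := by
              intro i hi
              have hij : i < j := by
                rw [Fin.lt_def]; omega
              rw [hx]; simp only [hij, if_true]
              exact hp1 i hi
            have hx01 : ∀ i, x i ∈ Set.Icc (0:ℝ) 1 := by
              intro i
              rw [hx]
              dsimp only
              split_ifs with h1 h2
              · exact hps i h1
              · exact ⟨zero_le_one, le_refl 1⟩
              · exact ⟨le_refl 0, zero_le_one⟩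
            have := hcontr j hjm x hx1 hx01
            have hsum : ∑ i ∈ univ.filter (fun i => i < j), S j i * x i = A := by
              rw [hA]
              apply Finset.sum_congr rfl
              intro i hi
              have := (mem_filter.mp hi).2
              rw [hx]; simp [this]
            rwa [hsum] at this
          -- the recurrence
          have hrec : ∀ k, T^[k+1] p j =
              sF j (T^[k] p) + (R j j - sF j (T^[k] p)) * T^[k] p j := by
            intro k
            rw [Function.iterate_succ_apply', hTj]
          have hyb : ∀ k, |T^[k] p j| ≤ 1 := by
            intro k
            obtain ⟨h0, h1⟩ := (hd k).2 j
            rw [abs_le]; exact ⟨by linarith, h1⟩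
          have := affine_aux hatend (tendsto_const_nhds.sub hatend) hBlt hyb hrec
          have heq : A / (1 - (R j j - A)) = pstar j := by
            rw [hp2 j hjm, ← hA]
            congr 1
            ring
          rwa [heq] at this
    intro j
    exact key ((j : ℕ) + 1) j (Nat.lt_succ_self _)
  refine ⟨main, ?_⟩
  intro q hq1 hq01 hfix
  funext j
  have hconst : Tendsto (fun k => T^[k] q j) atTop (𝓝 (q j)) := by
    have : ∀ k, T^[k] q j = q j := fun k => by rw [Function.iterate_fixed hfix]
    simp only [this]
    exact tendsto_const_nhds
  exact tendsto_nhds_unique hconst (main q hq1 hq01 j)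
end

section
/- Let S and R satisfy the hypotheses of the main convergence theorem and let T(p) = Sp + Rp - (Sp)*p. If p, p' ∈ {1}^m × [0,1]^{n-m} are both fixed points of T, then p = p'. -/
open Finset

theorem stmt17 {n m : ℕ} (S R : Matrix (Fin n) (Fin n) ℝ)
    (hSentries : ∀ i j, S i j ∈ Set.Icc (0 : ℝ) 1)
    (hSlower : ∀ i j : Fin n, i ≤ j → S i j = 0)
    (hSrow : ∀ j : Fin n, ∑ i, S j i ≤ 1)
    (hRdiag : ∀ i j : Fin n, i ≠ j → R i j = 0)
    (hR01 : ∀ j, R j j ∈ Set.Icc (0 : ℝ) 1)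
    (hR1 : ∀ j : Fin n, R j j = 1 ↔ (j : ℕ) < m)
    (hcontr : ∀ (j : Fin n), m ≤ (j : ℕ) → ∀ x : Fin n → ℝ,
      (∀ i : Fin n, (i : ℕ) < m → x i = 1) → (∀ i, x i ∈ Set.Icc (0 : ℝ) 1) →
      |R j j - ∑ i ∈ univ.filter (fun i => i < j), S j i * x i| < 1)
    (T : (Fin n → ℝ) → (Fin n → ℝ))
    (hT : ∀ p, T p = S.mulVec p + R.mulVec p - S.mulVec p * p)
    (p p' : Fin n → ℝ)
    (hp1 : ∀ j : Fin n, (j : ℕ) < m → p j = 1) (hp01 : ∀ j, p j ∈ Set.Icc (0 : ℝ) 1)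
    (hp1' : ∀ j : Fin n, (j : ℕ) < m → p' j = 1) (hp01' : ∀ j, p' j ∈ Set.Icc (0 : ℝ) 1)
    (hfix : T p = p) (hfix' : T p' = p') :
    p = p' := by
  have hS : ∀ (q : Fin n → ℝ) (j : Fin n),
      S.mulVec q j = ∑ i ∈ univ.filter (fun i => i < j), S j i * q i := by
    intro q j
    rw [Matrix.mulVec, dotProduct]
    symm
    apply Finset.sum_subset (filter_subset _ _)
    intro i _ hi
    simp only [mem_filter, mem_univ, true_and] at hi
    rw [hSlower j i (le_of_not_gt hi), zero_mul]
  have hRv : ∀ (q : Fin n → ℝ) (j : Fin n), R.mulVec q j = R j j * q j := by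
    intro q j
    rw [Matrix.mulVec, dotProduct]
    rw [Finset.sum_eq_single j]
    · intro i _ hij; rw [hRdiag j i (Ne.symm hij), zero_mul]
    · intro h; exact absurd (mem_univ j) h
  suffices main : ∀ N (j : Fin n), (j : ℕ) ≤ N → p j = p' j by
    funext j; exact main j j le_rfl
  intro N
  induction N using Nat.strong_induction_on with
  | _ N ihN =>
    intro j hjN
    have ih : ∀ i : Fin n, i < j → p i = p' i := by
      intro i hij
      have hij' : (i : ℕ) < (j : ℕ) := hij
      exact ihN (i : ℕ) (by omega) i le_rfl
    rcases lt_or_ge (j : ℕ) m with hjm | hjm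
    · rw [hp1 j hjm, hp1' j hjm]
    · have heq : ∀ i ∈ univ.filter (fun i => i < j), S j i * p i = S j i * p' i := by
        intro i hi
        simp only [mem_filter, mem_univ, true_and] at hi
        rw [ih i hi]
      set a := ∑ i ∈ univ.filter (fun i => i < j), S j i * p i with ha
      have ha' : ∑ i ∈ univ.filter (fun i => i < j), S j i * p' i = a :=
        (Finset.sum_congr rfl heq).symm
      have hfp : a + R j j * p j - a * p j = p j := by
        have := congrFun hfix j
        rw [hT] at this
        simpa [hS, hRv, ha] using this
      have hfp' : a + R j j * p' j - a * p' j = p' j := by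
        have := congrFun hfix' j
        rw [hT] at this
        simpa [hS, hRv, ha'] using this
      have hc : |R j j - a| < 1 := hcontr j hjm p hp1 hp01
      have hpos : 1 - R j j + a > 0 := by
        have := abs_lt.mp hc
        linarith [this.1, this.2]
      have h1 : p j * (1 - R j j + a) = a := by ring_nf; ring_nf at hfp; linarith
      have h1' : p' j * (1 - R j j + a) = a := by ring_nf; ring_nf at hfp'; linarith
      have : p j * (1 - R j j + a) = p' j * (1 - R j j + a) := by rw [h1, h1']
      exact mul_right_cancel₀ (ne_of_gt hpos) this
end
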